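/- Let S ⊆ [0,∞) with 0 ∈ S, let (X, d) be an S-valued ultrametric space, let {B_i}_{i∈I} be a clopen partition of X with basepoints p_i ∈ B_i, and let e_i be an S-valued ultrametric on B_i generating the subspace topology. Define D(x,y) = e_i(x,y) if x,y ∈ B_i, and D(x,y) = max(e_i(x,p_i), d(p_i,p_j), e_j(p_j,y)) if x ∈ B_i, y ∈ B_j with i ≠ j. Then D is an S-valued ultrametric on X generating the topology of X, and D|_{B_i × B_i} = e_i for all i. Moreover, if diam_d(B_i) ≤ ε and diam_{e_i}(B_i) ≤ ε for all i, then for all x,y: D(x,y) ≤ max(d(x,y), ε) and d(x,y) ≤ max(D(x,y), ε). -/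

import Mathlib

/-!
`D` hangs each piece `(B i, e i)` from its basepoint `p i` and joins the basepoints by `d`. For
`x ∈ B i`, `y ∈ B j`, `i ≠ j`, both `d (p i) (p j)` and `e i x (p i)` are at most `D x y`; with these
two bounds every ultrametric axiom of `D` reduces to the same axiom for one `e i` or for `d` on the
basepoints, and the `ε`-comparisons come from routing `d x y` through `p i` and `p j`.
Since `B i` is `d`-open, the other basepoints stay at `d`-distance at least some `r > 0` from
`p i`, so `D`-balls of radius `< r` about points of `B i` lie in `B i`, where `D = e i`.
-/

open Set Topology

/-- The metric topology of `d` coincides with the given topology on `X`. -/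
def GeneratesTopology {X : Type*} [TopologicalSpace X] (d : X → X → ℝ) : Prop :=
  ∀ s : Set X, IsOpen s ↔ ∀ x ∈ s, ∃ ε > 0, ∀ y, d x y < ε → y ∈ s

/-- `d` is an ultrametric on the whole type `X`. -/
def IsUltrametricOn {X : Type*} (d : X → X → ℝ) : Prop :=
  (∀ x y, d x y = 0 ↔ x = y) ∧ (∀ x y, d x y = d y x) ∧
    ∀ x y z, d x y ≤ max (d x z) (d z y)

/-- `d` is an ultrametric on the subset `A` of `X`. -/
def IsUltrametricOnSet {X : Type*} (A : Set X) (d : X → X → ℝ) : Prop :=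
  (∀ x ∈ A, ∀ y ∈ A, (d x y = 0 ↔ x = y)) ∧ (∀ x ∈ A, ∀ y ∈ A, d x y = d y x) ∧
    ∀ x ∈ A, ∀ y ∈ A, ∀ z ∈ A, d x y ≤ max (d x z) (d z y)

/-- The metric topology of `d` on `A` coincides with the subspace topology of `A`. -/
def GeneratesSubspaceTopology {X : Type*} [TopologicalSpace X] (A : Set X)
    (d : X → X → ℝ) : Prop :=
  ∀ s : Set X, s ⊆ A →
    ((∃ t, IsOpen t ∧ s = t ∩ A) ↔ ∀ x ∈ s, ∃ ε > 0, ∀ y ∈ A, d x y < ε → y ∈ s)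

section Ultrametric

variable {X : Type*} {d : X → X → ℝ}

theorem IsUltrametricOn.nonneg (hd : IsUltrametricOn d) (x y : X) : 0 ≤ d x y := by
  have h := hd.2.2 x x y
  rwa [(hd.1 x x).2 rfl, hd.2.1 y x, max_self] at h

theorem IsUltrametricOn.le_max_max (hd : IsUltrametricOn d) (x y z w : X) :
    d x w ≤ max (d x y) (max (d y z) (d z w)) :=
  (hd.2.2 x w y).trans (max_le_max le_rfl (hd.2.2 y w z))

theorem IsUltrametricOnSet.nonneg {A : Set X} (hd : IsUltrametricOnSet A d) {x y : X}
    (hx : x ∈ A) (hy : y ∈ A) : 0 ≤ d x y := by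
  have h := hd.2.2 x hx x hx y hy
  rwa [(hd.1 x hx x hx).2 rfl, hd.2.1 y hy x hx, max_self] at h

end Ultrametric

theorem eq_preimage_singleton_of_disjoint {X I : Type*} {B : I → Set X} {ι : X → I}
    (hdisj : ∀ i j, i ≠ j → Disjoint (B i) (B j)) (hι : ∀ x, x ∈ B (ι x)) :
    B = fun i => ι ⁻¹' {i} := by
  refine funext fun i => ext fun x => ⟨fun hx => ?_, fun hx => hx ▸ hι x⟩
  by_contra h
  exact (hdisj _ _ h).ne_of_mem (hι x) hx rfl

namespace Amalgam

variable {X I : Type*} {d : X → X → ℝ} {ι : X → I} {p : I → X} {e : I → X → X → ℝ}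
  {x y z : X}

open Classical in
/-- The `D` of the theorem, with the pieces `B i` taken as the fibres `ι ⁻¹' {i}`. -/
noncomputable def dist (d : X → X → ℝ) (ι : X → I) (p : I → X) (e : I → X → X → ℝ)
    (x y : X) : ℝ :=
  if ι x = ι y then e (ι x) x y
  else max (e (ι x) x (p (ι x))) (max (d (p (ι x)) (p (ι y))) (e (ι y) (p (ι y)) y))

theorem dist_of_eq (h : ι x = ι y) : dist d ι p e x y = e (ι x) x y := by
  simp [dist, h]

theorem dist_of_ne (h : ι x ≠ ι y) : dist d ι p e x y =
    max (e (ι x) x (p (ι x))) (max (d (p (ι x)) (p (ι y))) (e (ι y) (p (ι y)) y)) := by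
  simp [dist, h]

theorem dist_basepoint_le_dist_of_ne (h : ι x ≠ ι y) :
    e (ι x) x (p (ι x)) ≤ dist d ι p e x y := by
  rw [dist_of_ne h]
  exact le_max_left _ _

theorem dist_basepoints_le_dist (hd : IsUltrametricOn d)
    (he : ∀ i, IsUltrametricOnSet (ι ⁻¹' {i}) (e i)) (x y : X) :
    d (p (ι x)) (p (ι y)) ≤ dist d ι p e x y := by
  by_cases h : ι x = ι y
  · rw [h, (hd.1 _ _).2 rfl, dist_of_eq h]
    exact (he (ι x)).nonneg rfl h.symm
  · rw [dist_of_ne h]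
    exact le_max_of_le_right (le_max_left _ _)

theorem dist_comm (hd : IsUltrametricOn d) (he : ∀ i, IsUltrametricOnSet (ι ⁻¹' {i}) (e i))
    (hp : ∀ i, ι (p i) = i) (x y : X) : dist d ι p e x y = dist d ι p e y x := by
  by_cases h : ι x = ι y
  · rw [dist_of_eq h, dist_of_eq h.symm, h]
    exact (he (ι y)).2.1 x h y rfl
  · rw [dist_of_ne h, dist_of_ne (Ne.symm h), (he _).2.1 x rfl _ (hp _),
      (he _).2.1 _ (hp _) y rfl, hd.2.1 (p (ι x))]
    ac_rfl

theorem dist_eq_zero_iff (hd : IsUltrametricOn d)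
    (he : ∀ i, IsUltrametricOnSet (ι ⁻¹' {i}) (e i)) (hp : ∀ i, ι (p i) = i) :
    dist d ι p e x y = 0 ↔ x = y := by
  by_cases h : ι x = ι y
  · rw [dist_of_eq h]
    exact (he (ι x)).1 x rfl y h.symm
  · refine ⟨fun h0 => absurd ?_ h, fun hxy => absurd (congrArg ι hxy) h⟩
    have hpp : d (p (ι x)) (p (ι y)) = 0 :=
      le_antisymm (h0 ▸ dist_basepoints_le_dist hd he x y) (hd.nonneg _ _)
    simpa only [hp] using congrArg ι ((hd.1 _ _).1 hpp)

theorem dist_basepoint_le_max_of_ne (he : ∀ i, IsUltrametricOnSet (ι ⁻¹' {i}) (e i))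
    (hp : ∀ i, ι (p i) = i) (h : ι x ≠ ι y) (z : X) :
    e (ι x) x (p (ι x)) ≤ max (dist d ι p e x z) (dist d ι p e z y) := by
  by_cases hxz : ι x = ι z
  · calc e (ι x) x (p (ι x)) ≤ max (e (ι x) x z) (e (ι x) z (p (ι x))) :=
          (he _).2.2 x rfl _ (hp _) z hxz.symm
      _ = max (dist d ι p e x z) (e (ι z) z (p (ι z))) := by rw [dist_of_eq hxz, hxz]
      _ ≤ max (dist d ι p e x z) (dist d ι p e z y) :=
          max_le_max le_rfl (dist_basepoint_le_dist_of_ne (hxz ▸ h))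
  · exact le_max_of_le_left (dist_basepoint_le_dist_of_ne hxz)

theorem dist_le_max (hd : IsUltrametricOn d) (he : ∀ i, IsUltrametricOnSet (ι ⁻¹' {i}) (e i))
    (hp : ∀ i, ι (p i) = i) (x y z : X) :
    dist d ι p e x y ≤ max (dist d ι p e x z) (dist d ι p e z y) := by
  have hcomm := dist_comm hd he hp (d := d)
  by_cases hxy : ι x = ι y
  · rw [dist_of_eq hxy]
    by_cases hxz : ι x = ι z
    · rw [dist_of_eq hxz, dist_of_eq (hxz.symm.trans hxy), ← hxz]
      exact (he _).2.2 x rfl y hxy.symm z hxz.symm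
    · calc e (ι x) x y ≤ max (e (ι x) x (p (ι x))) (e (ι x) (p (ι x)) y) :=
            (he _).2.2 x rfl y hxy.symm _ (hp _)
        _ ≤ max (dist d ι p e x z) (dist d ι p e z y) := by
            rw [hxy, (he _).2.1 _ (hp _) y rfl, hcomm z y]
            exact max_le_max (hxy ▸ dist_basepoint_le_dist_of_ne hxz)
              (dist_basepoint_le_dist_of_ne (hxy ▸ hxz))
  · rw [dist_of_ne hxy]
    refine max_le (dist_basepoint_le_max_of_ne he hp hxy z) (max_le ?_ ?_)
    · calc d (p (ι x)) (p (ι y)) ≤ max (d (p (ι x)) (p (ι z))) (d (p (ι z)) (p (ι y))) :=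
            hd.2.2 _ _ _
        _ ≤ max (dist d ι p e x z) (dist d ι p e z y) :=
            max_le_max (dist_basepoints_le_dist hd he x z) (dist_basepoints_le_dist hd he z y)
    · rw [(he _).2.1 _ (hp _) y rfl, hcomm x z, hcomm z y, max_comm]
      exact dist_basepoint_le_max_of_ne he hp (Ne.symm hxy) z

theorem isUltrametricOn_dist (hd : IsUltrametricOn d)
    (he : ∀ i, IsUltrametricOnSet (ι ⁻¹' {i}) (e i)) (hp : ∀ i, ι (p i) = i) :
    IsUltrametricOn (dist d ι p e) :=
  ⟨fun _ _ => dist_eq_zero_iff hd he hp, dist_comm hd he hp, dist_le_max hd he hp⟩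

theorem dist_mem {S : Set ℝ} (hdS : ∀ x y, d x y ∈ S)
    (heS : ∀ i, ∀ x ∈ ι ⁻¹' {i}, ∀ y ∈ ι ⁻¹' {i}, e i x y ∈ S) (hp : ∀ i, ι (p i) = i)
    (x y : X) : dist d ι p e x y ∈ S := by
  have max_mem : ∀ a ∈ S, ∀ b ∈ S, max a b ∈ S := fun a ha b hb => by
    rcases max_choice a b with h | h <;> rwa [h]
  by_cases h : ι x = ι y
  · rw [dist_of_eq h]
    exact heS _ x rfl y h.symm
  · rw [dist_of_ne h]
    exact max_mem _ (heS _ x rfl _ (hp _)) _ (max_mem _ (hdS _ _) _ (heS _ _ (hp _) y rfl))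

section Topology

variable [TopologicalSpace X]

theorem exists_pos_dist_lt_imp_eq (hd : IsUltrametricOn d)
    (he : ∀ i, IsUltrametricOnSet (ι ⁻¹' {i}) (e i)) (hp : ∀ i, ι (p i) = i)
    (hdtop : GeneratesTopology d) (hopen : ∀ i, IsOpen (ι ⁻¹' {i})) (x : X) :
    ∃ r > 0, ∀ y, dist d ι p e x y < r → ι y = ι x := by
  obtain ⟨r, hr, hball⟩ := (hdtop _).1 (hopen (ι x)) (p (ι x)) (hp _)
  refine ⟨r, hr, fun y hy => ?_⟩
  have h := hball (p (ι y)) ((dist_basepoints_le_dist hd he x y).trans_lt hy)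
  rwa [mem_preimage, hp, mem_singleton_iff] at h

theorem generatesTopology_dist (hd : IsUltrametricOn d)
    (he : ∀ i, IsUltrametricOnSet (ι ⁻¹' {i}) (e i)) (hp : ∀ i, ι (p i) = i)
    (hdtop : GeneratesTopology d) (hopen : ∀ i, IsOpen (ι ⁻¹' {i}))
    (hetop : ∀ i, GeneratesSubspaceTopology (ι ⁻¹' {i}) (e i)) :
    GeneratesTopology (dist d ι p e) := by
  intro s
  constructor
  · intro hs x hx
    obtain ⟨r, hr, hfibre⟩ := exists_pos_dist_lt_imp_eq hd he hp hdtop hopen x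
    obtain ⟨ε, hε, hball⟩ :=
      (hetop (ι x) _ inter_subset_right).1 ⟨s, hs, rfl⟩ x ⟨hx, rfl⟩
    refine ⟨min ε r, lt_min hε hr, fun y hy => ?_⟩
    have hyx := hfibre y (hy.trans_le (min_le_right _ _))
    exact (hball y hyx <|
      (dist_of_eq hyx.symm).symm.trans_lt (hy.trans_le (min_le_left _ _))).1
  · intro hs
    refine isOpen_iff_forall_mem_open.2 fun x hx => ?_
    obtain ⟨t, ht, hts⟩ := (hetop (ι x) (s ∩ ι ⁻¹' {ι x}) inter_subset_right).2 <| by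
      rintro z ⟨hzs, hz⟩
      obtain ⟨ε, hε, hball⟩ := hs z hzs
      refine ⟨ε, hε, fun y hy hzy => ⟨hball y ?_, hy⟩⟩
      rwa [dist_of_eq (hz.trans hy.symm), hz]
    exact ⟨t ∩ ι ⁻¹' {ι x}, hts ▸ inter_subset_left, ht.inter (hopen _), hts ▸ ⟨hx, rfl⟩⟩

end Topology

variable {ε : ℝ}

theorem dist_le_max_of_diam_le (hd : IsUltrametricOn d) (hp : ∀ i, ι (p i) = i)
    (hdε : ∀ i, ∀ x ∈ ι ⁻¹' {i}, ∀ y ∈ ι ⁻¹' {i}, d x y ≤ ε)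
    (heε : ∀ i, ∀ x ∈ ι ⁻¹' {i}, ∀ y ∈ ι ⁻¹' {i}, e i x y ≤ ε) (x y : X) :
    dist d ι p e x y ≤ max (d x y) ε := by
  by_cases h : ι x = ι y
  · rw [dist_of_eq h]
    exact le_max_of_le_right (heε _ x rfl y h.symm)
  · rw [dist_of_ne h]
    refine max_le (le_max_of_le_right (heε _ x rfl _ (hp _)))
      (max_le ?_ (le_max_of_le_right (heε _ _ (hp _) y rfl)))
    calc d (p (ι x)) (p (ι y)) ≤ max (d (p (ι x)) x) (max (d x y) (d y (p (ι y)))) :=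
          hd.le_max_max _ _ _ _
      _ ≤ max (d x y) ε := max_le (le_max_of_le_right (hdε _ _ (hp _) x rfl))
          (max_le (le_max_left _ _) (le_max_of_le_right (hdε _ y rfl _ (hp _))))

theorem le_max_dist_of_diam_le (hd : IsUltrametricOn d)
    (he : ∀ i, IsUltrametricOnSet (ι ⁻¹' {i}) (e i)) (hp : ∀ i, ι (p i) = i)
    (hdε : ∀ i, ∀ x ∈ ι ⁻¹' {i}, ∀ y ∈ ι ⁻¹' {i}, d x y ≤ ε) (x y : X) :
    d x y ≤ max (dist d ι p e x y) ε := by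
  calc d x y ≤ max (d x (p (ι x))) (max (d (p (ι x)) (p (ι y))) (d (p (ι y)) y)) :=
        hd.le_max_max _ _ _ _
    _ ≤ max (dist d ι p e x y) ε := max_le (le_max_of_le_right (hdε _ x rfl _ (hp _)))
        (max_le (le_max_of_le_left (dist_basepoints_le_dist hd he x y))
          (le_max_of_le_right (hdε _ _ (hp _) y rfl)))

end Amalgam

theorem ultrametric_amalgamation_general {X : Type*} [TopologicalSpace X] {I : Type*}
    (S : Set ℝ)
    (d : X → X → ℝ) (hd : IsUltrametricOn d) (hdS : ∀ x y, d x y ∈ S)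
    (hdtop : GeneratesTopology d)
    (B : I → Set X) (hBclopen : ∀ i, IsClopen (B i))
    (hdisj : ∀ i j, i ≠ j → Disjoint (B i) (B j))
    (p : I → X) (hp : ∀ i, p i ∈ B i)
    (e : I → (X → X → ℝ)) (he : ∀ i, IsUltrametricOnSet (B i) (e i))
    (heS : ∀ i, ∀ x ∈ B i, ∀ y ∈ B i, e i x y ∈ S)
    (hetop : ∀ i, GeneratesSubspaceTopology (B i) (e i))
    (ι : X → I) (hι : ∀ x, x ∈ B (ι x))
    (D : X → X → ℝ)
    (hDeq : ∀ x y, ι x = ι y → D x y = e (ι x) x y)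
    (hDne : ∀ x y, ι x ≠ ι y →
      D x y = max (e (ι x) x (p (ι x)))
        (max (d (p (ι x)) (p (ι y))) (e (ι y) (p (ι y)) y))) :
    IsUltrametricOn D ∧ (∀ x y, D x y ∈ S) ∧ GeneratesTopology D ∧
      (∀ i, ∀ x ∈ B i, ∀ y ∈ B i, D x y = e i x y) ∧
      ∀ ε : ℝ, (∀ i, ∀ x ∈ B i, ∀ y ∈ B i, d x y ≤ ε) →
        (∀ i, ∀ x ∈ B i, ∀ y ∈ B i, e i x y ≤ ε) →
        ∀ x y, D x y ≤ max (d x y) ε ∧ d x y ≤ max (D x y) ε := by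
  obtain rfl := eq_preimage_singleton_of_disjoint hdisj hι
  obtain rfl : D = Amalgam.dist d ι p e := funext₂ fun x y => by
    by_cases h : ι x = ι y
    · rw [hDeq x y h, Amalgam.dist_of_eq h]
    · rw [hDne x y h, Amalgam.dist_of_ne h]
  refine ⟨Amalgam.isUltrametricOn_dist hd he hp, Amalgam.dist_mem hdS heS hp,
    Amalgam.generatesTopology_dist hd he hp hdtop (fun i => (hBclopen i).isOpen) hetop,
    fun i x hx y hy => ?_, fun ε hdε heε x y =>
      ⟨Amalgam.dist_le_max_of_diam_le hd hp hdε heε x y,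
        Amalgam.le_max_dist_of_diam_le hd he hp hdε x y⟩⟩
  rw [Amalgam.dist_of_eq (hx.trans hy.symm), hx]

/-- Amalgamation of `S`-valued ultrametrics along a clopen partition. -/
theorem ultrametric_amalgamation {X : Type*} [TopologicalSpace X] {I : Type*}
    (S : Set ℝ) (hS : S ⊆ Set.Ici 0) (hS0 : (0 : ℝ) ∈ S)
    (d : X → X → ℝ) (hd : IsUltrametricOn d) (hdS : ∀ x y, d x y ∈ S)
    (hdtop : GeneratesTopology d)
    (B : I → Set X) (hBclopen : ∀ i, IsClopen (B i))
    (hdisj : ∀ i j, i ≠ j → Disjoint (B i) (B j)) (hcover : ⋃ i, B i = univ)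
    (p : I → X) (hp : ∀ i, p i ∈ B i)
    (e : I → (X → X → ℝ)) (he : ∀ i, IsUltrametricOnSet (B i) (e i))
    (heS : ∀ i, ∀ x ∈ B i, ∀ y ∈ B i, e i x y ∈ S)
    (hetop : ∀ i, GeneratesSubspaceTopology (B i) (e i))
    (ι : X → I) (hι : ∀ x, x ∈ B (ι x))
    (D : X → X → ℝ)
    (hDeq : ∀ x y, ι x = ι y → D x y = e (ι x) x y)
    (hDne : ∀ x y, ι x ≠ ι y →
      D x y = max (e (ι x) x (p (ι x)))
        (max (d (p (ι x)) (p (ι y))) (e (ι y) (p (ι y)) y))) :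
    IsUltrametricOn D ∧ (∀ x y, D x y ∈ S) ∧ GeneratesTopology D ∧
      (∀ i, ∀ x ∈ B i, ∀ y ∈ B i, D x y = e i x y) ∧
      ∀ ε : ℝ, (∀ i, ∀ x ∈ B i, ∀ y ∈ B i, d x y ≤ ε) →
        (∀ i, ∀ x ∈ B i, ∀ y ∈ B i, e i x y ≤ ε) →
        ∀ x y, D x y ≤ max (d x y) ε ∧ d x y ≤ max (D x y) ε :=
  ultrametric_amalgamation_general S d hd hdS hdtop B hBclopen hdisj p hp e he heS hetop ι hι D hDeq
    hDne
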